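/- If N, n, r, s are positive integers with n ≥ 3, r > s, and R_2(n; r, s) > N, then R_3(n+1; 2r, s) > 2^N. -/

import Mathlib

/-- `χ` is an `(r,s)`-set-coloring of the complete `k`-uniform hypergraph on `Fin N`:
each `k`-element edge receives a set of exactly `s` colors from the palette `Fin r`. -/
def IsSetColoring (N k r s : ℕ) (χ : Finset (Fin N) → Finset (Fin r)) : Prop :=
  ∀ e : Finset (Fin N), e.card = k → (χ e).card = s

/-- There is a monochromatic `n`-clique: `n` vertices all of whose `k`-element
subsets share a common color. -/
def HasMonoClique (N k n r : ℕ) (χ : Finset (Fin N) → Finset (Fin r)) : Prop :=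
  ∃ S : Finset (Fin N), S.card = n ∧ ∃ c : Fin r, ∀ e ⊆ S, e.card = k → c ∈ χ e

/-- The `k`-uniform set-coloring Ramsey number `R_k(n;r,s)`. -/
noncomputable def setRamsey (k n r s : ℕ) : ℕ :=
  sInf {N | ∀ χ : Finset (Fin N) → Finset (Fin r),
    IsSetColoring N k r s χ → HasMonoClique N k n r χ}

/-- `A_q(m,d)`: the maximum size of a `q`-ary code of length `m` with minimum
Hamming distance at least `d`. -/
noncomputable def maxCode (q m d : ℕ) : ℕ :=
  sSup {M | ∃ C : Finset (Fin m → Fin q),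
    (∀ x ∈ C, ∀ y ∈ C, x ≠ y → d ≤ hammingDist x y) ∧ C.card = M}

/-- The graph on `Fin N` formed by the edges whose color set contains `i`. -/
def colorGraph (N r : ℕ) (χ : Finset (Fin N) → Finset (Fin r)) (i : Fin r) :
    SimpleGraph (Fin N) where
  Adj u v := u ≠ v ∧ i ∈ χ {u, v}
  symm := by
    refine ⟨?_⟩
    intro u v h
    exact ⟨h.1.symm, by rw [Finset.pair_comm]; exact h.2⟩
  loopless := by refine ⟨?_⟩; intro u h; exact h.1 rfl

/-- `R'(n;r,s)`: the least `N` such that every `(r,s)`-coloring of `K_N` has a color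
class with chromatic number at least `n`. -/
noncomputable def setRamsey' (n r s : ℕ) : ℕ :=
  sInf {N | ∀ χ : Finset (Fin N) → Finset (Fin r), IsSetColoring N 2 r s χ →
    ∃ i : Fin r, (n : ℕ∞) ≤ (colorGraph N r χ i).chromaticNumber}

/-- The Turán number `ex(N, K_n)`. -/
noncomputable def turanNumber (N n : ℕ) : ℕ :=
  sSup {m | ∃ G : SimpleGraph (Fin N), G.CliqueFree n ∧ G.edgeSet.ncard = m}


open Finset

lemma my_ramsey (q : ℕ) (hq : 0 < q) : ∀ k n : ℕ, ∃ M : ℕ,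
    ∀ (α : Type) [LinearOrder α] (A : Finset α) (f : Finset α → Fin q),
    M ≤ A.card → ∃ S ⊆ A, S.card = n ∧ ∃ c : Fin q, ∀ e ⊆ S, e.card = k → f e = c := by
  intro k
  induction k with
  | zero =>
    intro n
    refine ⟨n, fun α _ A f hA => ?_⟩
    obtain ⟨S, hSA, hS⟩ := Finset.exists_subset_card_eq (s := A) (n := n) hA
    exact ⟨S, hSA, hS, f ∅, fun e he hce => by rw [Finset.card_eq_zero.mp hce]⟩
  | succ k ih =>
    choose F hF using ih
    have chain : ∀ j : ℕ, ∃ M : ℕ,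
        ∀ (α : Type) [LinearOrder α] (A : Finset α) (f : Finset α → Fin q),
        M ≤ A.card → ∃ T ⊆ A, T.card = j ∧ ∃ col : α → Fin q,
        ∀ e ⊆ T, e.card = k + 1 → ∀ x ∈ e, (∀ y ∈ e, x ≤ y) → f e = col x := by
      intro j
      induction j with
      | zero =>
        exact ⟨0, fun α _ A f _ => ⟨∅, empty_subset A, rfl, fun _ => ⟨0, hq⟩,
          fun e he hce x hx _ => absurd (he hx) (notMem_empty x)⟩⟩
      | succ j ihj =>
        obtain ⟨Mj, hMj⟩ := ihj
        refine ⟨F Mj + 1, ?_⟩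
        intro α _ A f hA
        classical
        have hAne : A.Nonempty := card_pos.mp (by omega)
        set x := A.min' hAne with hxdef
        have hxA : x ∈ A := A.min'_mem hAne
        have hcard : F Mj ≤ (A.erase x).card := by
          rw [card_erase_of_mem hxA]; omega
        obtain ⟨B, hBA, hB, c, hc⟩ := hF Mj α (A.erase x) (fun e => f (insert x e)) hcard
        obtain ⟨T', hT'B, hT', col', hcol'⟩ := hMj α B f (le_of_eq hB.symm)
        have hxT' : x ∉ T' := fun hxT' => (mem_erase.mp (hBA (hT'B hxT'))).1 rfl
        refine ⟨insert x T', ?_, ?_, fun y => if y = x then c else col' y, ?_⟩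
        · intro a ha
          rcases mem_insert.mp ha with rfl | ha
          · exact hxA
          · exact erase_subset x A (hBA (hT'B ha))
        · rw [card_insert_of_notMem hxT', hT']
        · intro e he hce z hz hzmin
          by_cases hxe : x ∈ e
          · have hzx : z = x := by
              refine le_antisymm (hzmin x hxe) ?_
              rcases mem_insert.mp (he hz) with rfl | hzT'
              · exact le_refl _
              · exact A.min'_le z (erase_subset x A (hBA (hT'B hzT')))
            have herase : e.erase x ⊆ T' := by
              intro a ha
              rcases mem_insert.mp (he (erase_subset x e ha)) with rfl | h'
              · exact absurd (mem_erase.mp ha).1 (by simp)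
              · exact h'
            have hcarde : (e.erase x).card = k := by
              rw [card_erase_of_mem hxe, hce]
              omega
            have := hc (e.erase x) (herase.trans hT'B) hcarde
            rw [insert_erase hxe] at this
            rw [this, hzx]
            exact (if_pos rfl).symm
          · have heT' : e ⊆ T' := by
              intro a ha
              rcases mem_insert.mp (he ha) with rfl | h'
              · exact absurd ha hxe
              · exact h'
            have hzne : z ≠ x := fun hzx => hxe (hzx ▸ hz)
            rw [hcol' e heT' hce z hz hzmin]
            exact (if_neg hzne).symm
    intro n
    obtain ⟨M, hM⟩ := chain (q * n + 1)
    refine ⟨M, ?_⟩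
    intro α _ A f hA
    classical
    obtain ⟨T, hTA, hT, col, hcol⟩ := hM α A f hA
    have hlt : (univ : Finset (Fin q)).card * n < T.card := by
      rw [hT, card_univ, Fintype.card_fin]; omega
    obtain ⟨c, -, hcfib⟩ := exists_lt_card_fiber_of_mul_lt_card_of_maps_to
      (fun a (_ : a ∈ T) => mem_univ (col a)) hlt
    obtain ⟨S, hSfib, hS⟩ := Finset.exists_subset_card_eq (s := T.filter fun a => col a = c) (n := n) (le_of_lt hcfib)
    refine ⟨S, fun a ha => hTA (mem_filter.mp (hSfib ha)).1, hS, c, ?_⟩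
    intro e he hce
    have hne : e.Nonempty := card_pos.mp (by omega)
    have heT : e ⊆ T := fun a ha => (mem_filter.mp (hSfib (he ha))).1
    have h1 := hcol e heT hce (e.min' hne) (e.min'_mem hne) (fun y hy => e.min'_le y hy)
    have h2 : col (e.min' hne) = c := (mem_filter.mp (hSfib (he (e.min'_mem hne)))).2
    rw [h1, h2]

open Finset

def dset (N m : ℕ) (u v : Fin m) : Finset (Fin N) :=
  univ.filter fun i => Nat.testBit u.val i.val ≠ Nat.testBit v.val i.val

noncomputable def sdelta (N m : ℕ) (hN : 0 < N) (u v : Fin m) : Fin N :=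
  if h : (dset N m u v).Nonempty then (dset N m u v).max' h else ⟨0, hN⟩

section SDelta
variable {N m : ℕ} (hN : 0 < N) (hm : m ≤ 2 ^ N)
include hm

lemma dset_nonempty {u v : Fin m} (h : u ≠ v) : (dset N m u v).Nonempty := by
  by_contra hcon
  rw [not_nonempty_iff_eq_empty] at hcon
  apply h
  apply Fin.ext
  apply Nat.eq_of_testBit_eq
  intro j
  by_cases hj : j < N
  · by_contra hne
    have : (⟨j, hj⟩ : Fin N) ∈ dset N m u v := by
      simp only [dset, mem_filter, mem_univ, true_and]
      exact hne
    rw [hcon] at this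
    exact notMem_empty _ this
  · rw [Nat.testBit_eq_false_of_lt, Nat.testBit_eq_false_of_lt]
    · exact lt_of_lt_of_le v.isLt (hm.trans (Nat.pow_le_pow_right (by norm_num) (by omega)))
    · exact lt_of_lt_of_le u.isLt (hm.trans (Nat.pow_le_pow_right (by norm_num) (by omega)))

lemma sdelta_eq_max' {u v : Fin m} (h : u ≠ v) :
    sdelta N m hN u v = (dset N m u v).max' (dset_nonempty hm h) := dif_pos _

lemma sdelta_mem {u v : Fin m} (h : u ≠ v) : sdelta N m hN u v ∈ dset N m u v := by
  rw [sdelta_eq_max' hN hm h]; exact max'_mem _ _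

lemma testBit_sdelta_ne {u v : Fin m} (h : u ≠ v) :
    Nat.testBit u.val (sdelta N m hN u v).val ≠ Nat.testBit v.val (sdelta N m hN u v).val := by
  have := sdelta_mem hN hm h
  simpa [dset] using this

lemma testBit_eq_of_sdelta_lt {u v : Fin m} (h : u ≠ v) (j : ℕ)
    (hj : (sdelta N m hN u v).val < j) : Nat.testBit u.val j = Nat.testBit v.val j := by
  by_cases hjN : j < N
  · by_contra hne
    have hmem : (⟨j, hjN⟩ : Fin N) ∈ dset N m u v := by
      simp only [dset, mem_filter, mem_univ, true_and]; exact hne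
    have := le_max' _ _ hmem
    have h2 : j ≤ (sdelta N m hN u v).val := by
      rw [sdelta_eq_max' hN hm h]; exact Fin.le_def.mp this
    omega
  · rw [Nat.testBit_eq_false_of_lt, Nat.testBit_eq_false_of_lt]
    · exact lt_of_lt_of_le v.isLt (hm.trans (Nat.pow_le_pow_right (by norm_num) (by omega)))
    · exact lt_of_lt_of_le u.isLt (hm.trans (Nat.pow_le_pow_right (by norm_num) (by omega)))

omit hm in
lemma sdelta_comm (u v : Fin m) : sdelta N m hN u v = sdelta N m hN v u := by
  have : dset N m u v = dset N m v u := by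
    ext i; simp only [dset, mem_filter, mem_univ, true_and]; exact ne_comm
  simp only [sdelta, this]

lemma sdelta_bits_of_lt {u v : Fin m} (huv : u < v) :
    Nat.testBit u.val (sdelta N m hN u v).val = false ∧
    Nat.testBit v.val (sdelta N m hN u v).val = true := by
  have hne : u ≠ v := ne_of_lt huv
  have hd := testBit_sdelta_ne hN hm hne
  cases hu : Nat.testBit u.val (sdelta N m hN u v).val <;>
    cases hv : Nat.testBit v.val (sdelta N m hN u v).val
  · rw [hu, hv] at hd; exact absurd rfl hd
  · exact ⟨rfl, rfl⟩
  · exfalso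
    have : v.val < u.val := Nat.lt_of_testBit (sdelta N m hN u v).val hv hu
      (fun j hj => (testBit_eq_of_sdelta_lt hN hm hne j hj).symm)
    exact absurd (Fin.lt_def.mp huv) (by omega)
  · rw [hu, hv] at hd; exact absurd rfl hd

lemma sdelta_ne_of_lt {x y z : Fin m} (hxy : x < y) (hyz : y < z) :
    sdelta N m hN x y ≠ sdelta N m hN y z := by
  intro heq
  have h1 := (sdelta_bits_of_lt hN hm hxy).2
  have h2 := (sdelta_bits_of_lt hN hm hyz).1
  rw [heq] at h1
  rw [h1] at h2
  simp at h2

lemma sdelta_eq_of {u v : Fin m} (huv : u ≠ v) (d : Fin N)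
    (hd : Nat.testBit u.val d.val ≠ Nat.testBit v.val d.val)
    (habove : ∀ j : ℕ, d.val < j → Nat.testBit u.val j = Nat.testBit v.val j) :
    sdelta N m hN u v = d := by
  rw [sdelta_eq_max' hN hm huv]
  refine le_antisymm (max'_le _ _ _ ?_) (le_max' _ _ ?_)
  · intro i hi
    by_contra hcon
    have hdi : d.val < i.val := Fin.lt_def.mp (lt_of_not_ge hcon)
    have := habove i.val hdi
    simp only [dset, mem_filter, mem_univ, true_and] at hi
    exact hi this
  · simp only [dset, mem_filter, mem_univ, true_and]; exact hd

lemma sdelta_trans_max {x y z : Fin m} (hxy : x < y) (hyz : y < z) :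
    sdelta N m hN x z = max (sdelta N m hN x y) (sdelta N m hN y z) := by
  have hxz : x < z := hxy.trans hyz
  have hnexy : x ≠ y := ne_of_lt hxy
  have hneyz : y ≠ z := ne_of_lt hyz
  have hnexz : x ≠ z := ne_of_lt hxz
  rcases lt_or_gt_of_ne (sdelta_ne_of_lt hN hm hxy hyz) with h12 | h12
  · rw [max_eq_right (le_of_lt h12)]
    refine sdelta_eq_of hN hm hnexz _ ?_ ?_
    · rw [testBit_eq_of_sdelta_lt hN hm hnexy (sdelta N m hN y z).val (Fin.lt_def.mp h12)]
      exact testBit_sdelta_ne hN hm hneyz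
    · intro j hj
      rw [testBit_eq_of_sdelta_lt hN hm hnexy j ((Fin.lt_def.mp h12).trans hj),
        testBit_eq_of_sdelta_lt hN hm hneyz j hj]
  · rw [max_eq_left (le_of_lt h12)]
    refine sdelta_eq_of hN hm hnexz _ ?_ ?_
    · rw [← testBit_eq_of_sdelta_lt hN hm hneyz (sdelta N m hN x y).val (Fin.lt_def.mp h12)]
      exact testBit_sdelta_ne hN hm hnexy
    · intro j hj
      rw [testBit_eq_of_sdelta_lt hN hm hnexy j hj,
        testBit_eq_of_sdelta_lt hN hm hneyz j ((Fin.lt_def.mp h12).trans hj)]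

end SDelta
def encC (r : ℕ) (b : Bool) (c : Fin r) : Fin (2 * r) :=
  ⟨2 * c.val + cond b 1 0, by have := c.isLt; cases b <;> simp <;> omega⟩

lemma encC_inj (r : ℕ) (b : Bool) : Function.Injective (encC r b) := by
  intro c c' h
  have := congrArg Fin.val h
  simp only [encC] at this
  exact Fin.ext (by omega)

lemma triple_nonempty {γ : Type} [DecidableEq γ] {e : Finset γ} (h : e.card = 3) :
    e.Nonempty := Finset.card_pos.mp (by omega)

lemma triple_mid_nonempty {γ : Type} [LinearOrder γ] {e : Finset γ} (h : e.card = 3) :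
    ((e.erase (e.min' (triple_nonempty h))).erase (e.max' (triple_nonempty h))).Nonempty := by
  apply Finset.card_pos.mp
  have hmin := e.min'_mem (triple_nonempty h)
  have hmax := e.max'_mem (triple_nonempty h)
  have hne : e.min' (triple_nonempty h) < e.max' (triple_nonempty h) :=
    Finset.min'_lt_max'_of_card e (by omega)
  have hmem : e.max' (triple_nonempty h) ∈ e.erase (e.min' (triple_nonempty h)) :=
    Finset.mem_erase.mpr ⟨ne_of_gt hne, hmax⟩
  rw [Finset.card_erase_of_mem hmem, Finset.card_erase_of_mem hmin, h]
  omega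

noncomputable def midE {γ : Type} [LinearOrder γ] (e : Finset γ) (h : e.card = 3) : γ :=
  ((e.erase (e.min' (triple_nonempty h))).erase (e.max' (triple_nonempty h))).min'
    (triple_mid_nonempty h)

noncomputable def stepColoring (N r m : ℕ) (hN : 0 < N)
    (χ : Finset (Fin N) → Finset (Fin r)) (e : Finset (Fin m)) : Finset (Fin (2 * r)) :=
  if h : e.card = 3 then
    (χ {sdelta N m hN (e.min' (triple_nonempty h)) (midE e h),
        sdelta N m hN (midE e h) (e.max' (triple_nonempty h))}).image
      (encC r (decide (sdelta N m hN (e.min' (triple_nonempty h)) (midE e h) <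
        sdelta N m hN (midE e h) (e.max' (triple_nonempty h)))))
  else ∅

section spec
variable {γ : Type} [LinearOrder γ] [DecidableEq γ] {x y z : γ} (hxy : x < y) (hyz : y < z)
include hxy hyz

lemma triple_card : ({x, y, z} : Finset γ).card = 3 := by
  rw [Finset.card_insert_of_notMem, Finset.card_insert_of_notMem, Finset.card_singleton]
  · simp only [Finset.mem_singleton]
    exact ne_of_lt hyz
  · simp only [Finset.mem_insert, Finset.mem_singleton]
    push_neg
    exact ⟨ne_of_lt hxy, ne_of_lt (hxy.trans hyz)⟩

lemma triple_min' (H : ({x, y, z} : Finset γ).Nonempty) : ({x, y, z} : Finset γ).min' H = x := by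
  refine le_antisymm (Finset.min'_le _ _ (by simp)) (Finset.le_min' _ _ _ ?_)
  intro w hw
  simp only [Finset.mem_insert, Finset.mem_singleton] at hw
  rcases hw with rfl | rfl | rfl
  · exact le_refl _
  · exact le_of_lt hxy
  · exact le_of_lt (hxy.trans hyz)

lemma triple_max' (H : ({x, y, z} : Finset γ).Nonempty) : ({x, y, z} : Finset γ).max' H = z := by
  refine le_antisymm (Finset.max'_le _ _ _ ?_) (Finset.le_max' _ _ (by simp))
  intro w hw
  simp only [Finset.mem_insert, Finset.mem_singleton] at hw
  rcases hw with rfl | rfl | rfl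
  · exact le_of_lt (hxy.trans hyz)
  · exact le_of_lt hyz
  · exact le_refl _

lemma triple_midE (H : ({x, y, z} : Finset γ).card = 3) : midE {x, y, z} H = y := by
  rw [midE]
  have hmem := Finset.min'_mem _ (triple_mid_nonempty H)
  simp only [Finset.mem_erase, Finset.mem_insert, Finset.mem_singleton] at hmem
  obtain ⟨hne1, hne2, hmem3⟩ := hmem
  rcases hmem3 with h' | h' | h'
  · exact absurd (h'.trans (triple_min' hxy hyz _).symm) hne2
  · exact h'
  · exact absurd (h'.trans (triple_max' hxy hyz _).symm) hne1

end spec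

lemma stepColoring_spec {N r m : ℕ} (hN : 0 < N) (χ : Finset (Fin N) → Finset (Fin r))
    {x y z : Fin m} (hxy : x < y) (hyz : y < z) :
    stepColoring N r m hN χ {x, y, z} =
      (χ {sdelta N m hN x y, sdelta N m hN y z}).image
        (encC r (decide (sdelta N m hN x y < sdelta N m hN y z))) := by
  unfold stepColoring
  split
  · rw [triple_min' hxy hyz, triple_max' hxy hyz, triple_midE hxy hyz]
  · exact absurd (triple_card hxy hyz) (by assumption)
lemma exists_sorted_triple {γ : Type} [LinearOrder γ] [DecidableEq γ] {e : Finset γ}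
    (h : e.card = 3) : ∃ x y z : γ, x < y ∧ y < z ∧ e = {x, y, z} := by
  obtain ⟨a, b, c, hab, hac, hbc, rfl⟩ := Finset.card_eq_three.mp h
  rcases lt_or_gt_of_ne hab with h1 | h1 <;> rcases lt_or_gt_of_ne hac with h2 | h2 <;>
    rcases lt_or_gt_of_ne hbc with h3 | h3
  · exact ⟨a, b, c, h1, h3, rfl⟩
  · exact ⟨a, c, b, h2, h3, by ext w; simp only [Finset.mem_insert, Finset.mem_singleton]; tauto⟩
  · exact absurd (h2.trans (h1.trans h3)) (lt_irrefl c)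
  · exact ⟨c, a, b, h2, h1, by ext w; simp only [Finset.mem_insert, Finset.mem_singleton]; tauto⟩
  · exact ⟨b, a, c, h1, h2, by ext w; simp only [Finset.mem_insert, Finset.mem_singleton]; tauto⟩
  · exact absurd (h2.trans (h3.trans h1)) (lt_irrefl a)
  · exact ⟨b, c, a, h3, h2, by ext w; simp only [Finset.mem_insert, Finset.mem_singleton]; tauto⟩
  · exact ⟨c, b, a, h3, h1, by ext w; simp only [Finset.mem_insert, Finset.mem_singleton]; tauto⟩

lemma step_up_key {N n r s m : ℕ} (hN : 0 < N) (hn : 3 ≤ n) (hs : 1 ≤ s) (hm : m ≤ 2 ^ N)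
    (χ : Finset (Fin N) → Finset (Fin r)) (hχ : IsSetColoring N 2 r s χ)
    (hmono : ¬ HasMonoClique N 2 n r χ) :
    ∃ ψ : Finset (Fin m) → Finset (Fin (2 * r)),
      IsSetColoring m 3 (2 * r) s ψ ∧ ¬ HasMonoClique m 3 (n + 1) (2 * r) ψ := by
  refine ⟨stepColoring N r m hN χ, ?_, ?_⟩
  · intro e he
    obtain ⟨x, y, z, hxy, hyz, rfl⟩ := exists_sorted_triple he
    rw [stepColoring_spec hN χ hxy hyz,
      Finset.card_image_of_injective _ (encC_inj r _)]
    exact hχ _ (Finset.card_pair (sdelta_ne_of_lt hN hm hxy hyz))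
  · rintro ⟨S, hScard, γc, hγ⟩
    apply hmono
    set σ := S.orderIsoOfFin hScard with hσ
    set u : ℕ → Fin m := fun i => (σ ⟨min i n, by omega⟩ : {a // a ∈ S}).val with hu
    have humem : ∀ i, u i ∈ S := fun i => (σ _).2
    have humono : ∀ i j : ℕ, i < j → j ≤ n → u i < u j := by
      intro i j hij hj
      have h1 : (⟨min i n, by omega⟩ : Fin (n+1)) < ⟨min j n, by omega⟩ := by
        rw [Fin.lt_def]; simp; omega
      exact Subtype.coe_lt_coe.mpr (σ.lt_iff_lt.mpr h1)
    set c0 : Fin r := ⟨γc.val / 2, by have := γc.isLt; omega⟩ with hc0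
    set b0 : Bool := decide (γc.val % 2 = 1) with hb0
    have trip : ∀ a b c : ℕ, a < b → b < c → c ≤ n →
        c0 ∈ χ {sdelta N m hN (u a) (u b), sdelta N m hN (u b) (u c)} ∧
        decide (sdelta N m hN (u a) (u b) < sdelta N m hN (u b) (u c)) = b0 := by
      intro a b c hab hbc hcn
      have h1 : u a < u b := humono a b hab (by omega)
      have h2 : u b < u c := humono b c hbc hcn
      have hsub : ({u a, u b, u c} : Finset (Fin m)) ⊆ S := by
        intro w hw
        simp only [Finset.mem_insert, Finset.mem_singleton] at hw
        rcases hw with rfl | rfl | rfl <;> exact humem _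
      have hmem := hγ _ hsub (triple_card h1 h2)
      rw [stepColoring_spec hN χ h1 h2] at hmem
      obtain ⟨cc, hcc, henc⟩ := Finset.mem_image.mp hmem
      have hval : 2 * cc.val +
          cond (decide (sdelta N m hN (u a) (u b) < sdelta N m hN (u b) (u c))) 1 0
          = γc.val := by
        have := congrArg Fin.val henc
        simpa [encC] using this
      rcases Bool.eq_false_or_eq_true
          (decide (sdelta N m hN (u a) (u b) < sdelta N m hN (u b) (u c))) with hsg | hsg <;>
        rw [hsg] at hval ⊢ <;> simp only [Bool.cond_false, Bool.cond_true] at hval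
      · constructor
        · have hceq : cc = c0 := Fin.ext (by rw [hc0]; simp; omega)
          rwa [← hceq]
        · rw [hb0]; symm; rw [decide_eq_true_eq]; omega
      · constructor
        · have hceq : cc = c0 := Fin.ext (by rw [hc0]; simp; omega)
          rwa [← hceq]
        · rw [hb0]; symm; rw [decide_eq_false_iff_not]; omega
    set d : ℕ → Fin N := fun i => sdelta N m hN (u i) (u (i+1)) with hd
    have hkey : (∀ a b : ℕ, a < b → b + 1 ≤ n → c0 ∈ χ {d a, d b}) ∧
        (∀ a b : ℕ, a < b → b + 1 ≤ n → d a ≠ d b) := by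
      rcases Bool.eq_false_or_eq_true b0 with hb | hb
      · -- increasing case
        have hcons : ∀ i, i + 2 ≤ n → d i < d (i+1) := by
          intro i hi
          have h2 := (trip i (i+1) (i+2) (by omega) (by omega) hi).2
          rw [hb, decide_eq_true_eq] at h2
          rw [hd]
          exact h2
        have hincr : ∀ j a : ℕ, a < j → j + 1 ≤ n → d a < d j := by
          intro j
          induction j with
          | zero => intro a ha _; omega
          | succ j ih =>
            intro a ha hj
            rcases Nat.lt_succ_iff_lt_or_eq.mp ha with h' | h'
            · exact (ih a h' (by omega)).trans (hcons j (by omega))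
            · subst h'; exact hcons a (by omega)
        have hspan : ∀ b a : ℕ, a < b → b ≤ n → sdelta N m hN (u a) (u b) = d (b - 1) := by
          intro b
          induction b with
          | zero => intro a ha _; omega
          | succ b ih =>
            intro a ha hb2
            rcases Nat.lt_succ_iff_lt_or_eq.mp ha with h' | h'
            · have h1 : u a < u b := humono a b h' (by omega)
              have h2 : u b < u (b+1) := humono b (b+1) (by omega) hb2
              rw [sdelta_trans_max hN hm h1 h2, ih a h' (by omega)]
              simp only [Nat.add_sub_cancel]
              have hblt : d (b-1) < d b := hincr b (b-1) (by omega) (by omega)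
              exact max_eq_right (le_of_lt hblt)
            · subst h'
              rfl
        constructor
        · intro a b hab hbn
          have h0 := (trip a (a+1) (b+1) (by omega) (by omega) (by omega)).1
          rw [hspan (b+1) (a+1) (by omega) (by omega)] at h0
          simp only [Nat.add_sub_cancel] at h0
          rwa [hd] at h0
        · intro a b hab hbn
          exact ne_of_lt (hincr b a hab hbn)
      · -- decreasing case
        have hcons : ∀ i, i + 2 ≤ n → d (i+1) < d i := by
          intro i hi
          have h2 := (trip i (i+1) (i+2) (by omega) (by omega) hi).2
          rw [hb, decide_eq_false_iff_not] at h2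
          have hne := sdelta_ne_of_lt hN hm (humono i (i+1) (by omega) (by omega))
            (humono (i+1) (i+2) (by omega) hi)
          rw [hd]
          exact lt_of_le_of_ne (not_lt.mp h2) (Ne.symm hne)
        have hdecr : ∀ j a : ℕ, a < j → j + 1 ≤ n → d j < d a := by
          intro j
          induction j with
          | zero => intro a ha _; omega
          | succ j ih =>
            intro a ha hj
            rcases Nat.lt_succ_iff_lt_or_eq.mp ha with h' | h'
            · exact (hcons j (by omega)).trans (ih a h' (by omega))
            · subst h'; exact hcons a (by omega)
        have hspan : ∀ b a : ℕ, a < b → b ≤ n → sdelta N m hN (u a) (u b) = d a := by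
          intro b
          induction b with
          | zero => intro a ha _; omega
          | succ b ih =>
            intro a ha hb2
            rcases Nat.lt_succ_iff_lt_or_eq.mp ha with h' | h'
            · have h1 : u a < u b := humono a b h' (by omega)
              have h2 : u b < u (b+1) := humono b (b+1) (by omega) hb2
              rw [sdelta_trans_max hN hm h1 h2, ih a h' (by omega)]
              exact max_eq_left (le_of_lt (hdecr b a h' hb2))
            · subst h'; rfl
        constructor
        · intro a b hab hbn
          have h0 := (trip a b (b+1) hab (by omega) hbn).1
          rwa [hspan b a hab (by omega), hd] at h0
        · intro a b hab hbn
          exact ne_of_gt (hdecr b a hab hbn)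
    obtain ⟨hpair, hdne⟩ := hkey
    refine ⟨(Finset.range n).image d, ?_, c0, ?_⟩
    · rw [Finset.card_image_of_injOn, Finset.card_range]
      intro a ha b hb hab2
      simp only [Finset.mem_coe, Finset.mem_range] at ha hb
      by_contra hne2
      rcases lt_or_gt_of_ne hne2 with h' | h'
      · exact hdne a b h' (by omega) hab2
      · exact hdne b a h' (by omega) hab2.symm
    · intro e he hce
      obtain ⟨p, p2, hpq, rfl⟩ := Finset.card_eq_two.mp hce
      obtain ⟨a, ha, rfl⟩ := Finset.mem_image.mp (he (Finset.mem_insert_self _ _))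
      obtain ⟨b, hb2, rfl⟩ := Finset.mem_image.mp
        (he (Finset.mem_insert_of_mem (Finset.mem_singleton_self p2)))
      rw [Finset.mem_range] at ha hb2
      rcases lt_trichotomy a b with h' | h' | h'
      · exact hpair a b h' (by omega)
      · subst h'; exact absurd rfl hpq
      · have h0 := hpair b a h' (by omega)
        rwa [Finset.pair_comm] at h0

/-- Theorem 6: stepping up from graphs to 3-uniform hypergraphs. -/
theorem set_ramsey_step_up_graphs (N n r s : ℕ) (hN : 1 ≤ N) (hn : 3 ≤ n)
    (hs : 1 ≤ s) (hsr : s < r) (h : N < setRamsey 2 n r s) :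
    2 ^ N < setRamsey 3 (n + 1) (2 * r) s := by
  have hrpos : 0 < 2 * r := by omega
  have hN2 : ¬ ∀ χ : Finset (Fin N) → Finset (Fin r),
      IsSetColoring N 2 r s χ → HasMonoClique N 2 n r χ := by
    intro hmem
    have h2 : setRamsey 2 n r s ≤ N := Nat.sInf_le hmem
    omega
  push_neg at hN2
  obtain ⟨χ, hχ, hχmono⟩ := hN2
  have hne3 : {M | ∀ ψ : Finset (Fin M) → Finset (Fin (2 * r)),
      IsSetColoring M 3 (2 * r) s ψ → HasMonoClique M 3 (n + 1) (2 * r) ψ}.Nonempty := by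
    obtain ⟨M, hM⟩ := my_ramsey (2 * r) hrpos 3 (n + 1)
    refine ⟨M, ?_⟩
    intro ψ hψ
    classical
    have hpick : ∀ e : Finset (Fin M), e.card = 3 → (ψ e).Nonempty := fun e he =>
      Finset.card_pos.mp (by rw [hψ e he]; omega)
    obtain ⟨S, hSsub, hScard, c, hc⟩ := hM (Fin M) Finset.univ
      (fun e => if h : (ψ e).Nonempty then h.choose else ⟨0, hrpos⟩) (by simp)
    refine ⟨S, hScard, c, ?_⟩
    intro e he hce
    have hne := hpick e hce
    have h3 := hc e he hce
    rw [dif_pos hne] at h3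
    rw [← h3]
    exact hne.choose_spec
  have hmemInf := Nat.sInf_mem hne3
  by_contra hcon
  push_neg at hcon
  have hle : setRamsey 3 (n + 1) (2 * r) s ≤ 2 ^ N := hcon
  obtain ⟨ψ, hψ, hψmono⟩ := step_up_key (show 0 < N by omega) hn hs hle χ hχ hχmono
  exact hψmono (hmemInf ψ hψ)
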